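/- arXiv:2011.07916 — 2 statements merged into one kernel-verified Lean document; each statement's English description precedes it below -/
import Mathlib

section
/- If A is an n×n real matrix with all entries strictly positive, then there exists exactly one (up to positive scaling) eigenvector α of A with all components strictly positive, and its associated eigenvalue λ is the spectral radius of A. -/
/-!
Maximise `t` over the compact set of pairs `(t, x)` with `x` a probability vector and
`t • x ≤ A x`. At a maximiser equality holds: otherwise `A (A x - t x)` is strictly positive,
so the normalisation of `A x` admits a larger `t`. A positive eigenvector `y` of `Aᵀ` then
controls everything by pairing: if `μ • w ≤ A w` with `w ≥ 0`, `w ≠ 0`, then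
`μ (y ⬝ᵥ w) ≤ y ⬝ᵥ A w = ρ (y ⬝ᵥ w)`, so `μ ≤ ρ`. Applied to positive eigenvectors (both ways)
and to `|v|` for complex eigenvectors `v`, this identifies every positive eigenvalue with `ρ`
and bounds the spectrum by it. Two positive eigenvectors `x`, `y` for the same eigenvalue are
proportional: subtracting the largest multiple of `x` below `y` leaves a nonnegative
eigenvector with a zero coordinate, which must vanish.
-/

open Finset Matrix Filter Topology

section

variable {ι : Type*} [Fintype ι]

theorem dotProduct_pos_of_pos_of_nonneg {y w : ι → ℝ} (hy : ∀ i, 0 < y i) (hw : 0 ≤ w)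
    (hw0 : w ≠ 0) : 0 < y ⬝ᵥ w := by
  obtain ⟨j, hj⟩ := Function.ne_iff.1 hw0
  exact sum_pos' (fun i _ => mul_nonneg (hy i).le (hw i))
    ⟨j, mem_univ j, mul_pos (hy j) ((hw j).lt_of_ne' hj)⟩

theorem ne_zero_of_mem_stdSimplex {x : ι → ℝ} (hx : x ∈ stdSimplex ℝ ι) : x ≠ 0 := by
  rintro rfl
  simpa using hx.2

theorem inv_sum_smul_mem_stdSimplex {z : ι → ℝ} (hz : 0 ≤ z) (hz0 : z ≠ 0) :
    (∑ i, z i)⁻¹ • z ∈ stdSimplex ℝ ι := by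
  have hsum : 0 < ∑ i, z i := by
    simpa [dotProduct] using dotProduct_pos_of_pos_of_nonneg (fun _ => one_pos) hz hz0
  refine ⟨fun i => mul_nonneg (inv_nonneg.2 hsum.le) (hz i), ?_⟩
  simp only [Pi.smul_apply, smul_eq_mul, ← mul_sum, inv_mul_cancel₀ hsum.ne']

theorem exists_gt_smul_le_of_forall_mul_lt {t : ℝ} {z u : ι → ℝ} (h : ∀ i, t * z i < u i) :
    ∃ s > t, s • z ≤ u := by
  have hev : ∀ᶠ s in 𝓝 t, ∀ i, s * z i < u i := eventually_all.2 fun i =>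
    (continuous_id.mul continuous_const).continuousAt.eventually_lt continuousAt_const (h i)
  obtain ⟨s, hs, hts⟩ := ((hev.filter_mono nhdsWithin_le_nhds).and
    (self_mem_nhdsWithin (s := Set.Ioi t))).exists
  exact ⟨s, hts, fun i => (hs i).le⟩

namespace Matrix

variable {A : Matrix ι ι ℝ}

theorem mulVec_pos_of_pos (hA : ∀ i j, 0 < A i j) {w : ι → ℝ} (hw : 0 ≤ w) (hw0 : w ≠ 0)
    (i : ι) : 0 < (A *ᵥ w) i :=
  dotProduct_pos_of_pos_of_nonneg (hA i) hw hw0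

theorem pos_of_nonneg_of_mulVec_eq_smul (hA : ∀ i j, 0 < A i j) {v : ι → ℝ} {r : ℝ}
    (hv : 0 ≤ v) (hv0 : v ≠ 0) (hAv : A *ᵥ v = r • v) (i : ι) : 0 < v i := by
  have h := mulVec_pos_of_pos hA hv hv0 i
  rw [hAv, Pi.smul_apply, smul_eq_mul] at h
  exact (hv i).lt_of_ne fun h0 => by simp [← h0] at h

/-- The Perron root of `A` is the largest `t` occurring in this set. -/
def collatzWielandtSet (A : Matrix ι ι ℝ) : Set (ℝ × (ι → ℝ)) :=
  {p | p.2 ∈ stdSimplex ℝ ι ∧ 0 ≤ p.1 ∧ p.1 • p.2 ≤ A *ᵥ p.2}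

theorem le_sum_of_smul_le_mulVec (hA : ∀ i j, 0 ≤ A i j) {x : ι → ℝ} {t : ℝ}
    (hx : x ∈ stdSimplex ℝ ι) (h : t • x ≤ A *ᵥ x) : t ≤ ∑ i, ∑ j, A i j :=
  calc t = ∑ i, t * x i := by rw [← mul_sum, hx.2, mul_one]
    _ ≤ ∑ i, (A *ᵥ x) i := sum_le_sum fun i _ => h i
    _ ≤ ∑ i, ∑ j, A i j := sum_le_sum fun i _ => sum_le_sum fun j _ =>
      mul_le_of_le_one_right (hA i j) (mem_Icc_of_mem_stdSimplex hx j).2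

theorem isCompact_collatzWielandtSet (hA : ∀ i j, 0 ≤ A i j) :
    IsCompact (collatzWielandtSet A) := by
  refine ((isCompact_Icc (a := 0) (b := ∑ i, ∑ j, A i j)).prod
    (isCompact_stdSimplex ℝ ι)).of_isClosed_subset ?_ ?_
  · exact ((isClosed_stdSimplex ℝ ι).preimage continuous_snd).inter <|
      (isClosed_le continuous_const continuous_fst).inter <|
      isClosed_le (continuous_fst.smul continuous_snd)
        (continuous_const.matrix_mulVec continuous_snd)
  · rintro ⟨t, x⟩ ⟨hx, ht, h⟩
    exact ⟨⟨ht, le_sum_of_smul_le_mulVec hA hx h⟩, hx⟩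

theorem collatzWielandtSet_nonempty [Nonempty ι] (hA : ∀ i j, 0 ≤ A i j) :
    (collatzWielandtSet A).Nonempty := by
  obtain ⟨x, hx⟩ : (stdSimplex ℝ ι).Nonempty := Set.nonempty_coe_sort.1 inferInstance
  refine ⟨(0, x), hx, le_rfl, ?_⟩
  rw [zero_smul]
  exact fun i => dotProduct_nonneg_of_nonneg (hA i) hx.1

theorem exists_gt_smul_mulVec_le_mulVec_mulVec (hA : ∀ i j, 0 < A i j) {x : ι → ℝ} {t : ℝ}
    (h : t • x ≤ A *ᵥ x) (hne : t • x ≠ A *ᵥ x) :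
    ∃ s > t, s • (A *ᵥ x) ≤ A *ᵥ (A *ᵥ x) := by
  refine exists_gt_smul_le_of_forall_mul_lt fun i => ?_
  have := mulVec_pos_of_pos hA (sub_nonneg.2 h) (sub_ne_zero.2 hne.symm) i
  rwa [mulVec_sub, mulVec_smul, Pi.sub_apply, sub_pos, Pi.smul_apply, smul_eq_mul] at this

theorem mulVec_eq_smul_of_isMaxOn (hA : ∀ i j, 0 < A i j) {p : ℝ × (ι → ℝ)}
    (hp : p ∈ collatzWielandtSet A) (hmax : IsMaxOn Prod.fst (collatzWielandtSet A) p) :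
    A *ᵥ p.2 = p.1 • p.2 := by
  obtain ⟨t, x⟩ := p
  obtain ⟨hx, ht, h⟩ := hp
  by_contra hne
  obtain ⟨s, hts, hs⟩ := exists_gt_smul_mulVec_le_mulVec_mulVec hA h (Ne.symm hne)
  have hAx : ∀ i, 0 < (A *ᵥ x) i := mulVec_pos_of_pos hA hx.1 (ne_zero_of_mem_stdSimplex hx)
  obtain ⟨j, -⟩ := Function.ne_iff.1 (ne_zero_of_mem_stdSimplex hx)
  have hAx0 : A *ᵥ x ≠ 0 := fun h0 => (hAx j).ne' (congrFun h0 j)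
  have hmem : (s, (∑ i, (A *ᵥ x) i)⁻¹ • A *ᵥ x) ∈ collatzWielandtSet A := by
    refine ⟨inv_sum_smul_mem_stdSimplex (fun i => (hAx i).le) hAx0, ht.trans hts.le, ?_⟩
    rw [mulVec_smul, smul_comm]
    exact smul_le_smul_of_nonneg_left hs (inv_nonneg.2 (sum_nonneg fun i _ => (hAx i).le))
  exact hts.not_ge (hmax hmem)

theorem exists_pos_eigenvector_of_pos [Nonempty ι] (hA : ∀ i j, 0 < A i j) :
    ∃ (x : ι → ℝ) (r : ℝ), (∀ i, 0 < x i) ∧ A *ᵥ x = r • x := by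
  have hA' : ∀ i j, 0 ≤ A i j := fun i j => (hA i j).le
  obtain ⟨⟨r, x⟩, hp, hmax⟩ := (isCompact_collatzWielandtSet hA').exists_isMaxOn
    (collatzWielandtSet_nonempty hA') continuous_fst.continuousOn
  have hAx := mulVec_eq_smul_of_isMaxOn hA hp hmax
  exact ⟨x, r, pos_of_nonneg_of_mulVec_eq_smul hA hp.1.1 (ne_zero_of_mem_stdSimplex hp.1) hAx,
    hAx⟩

theorem le_of_smul_le_mulVec_of_vecMul_eq_smul {y w : ι → ℝ} {ρ μ : ℝ} (hy : ∀ i, 0 < y i)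
    (hyA : y ᵥ* A = ρ • y) (hw : 0 ≤ w) (hw0 : w ≠ 0) (h : μ • w ≤ A *ᵥ w) : μ ≤ ρ := by
  refine le_of_mul_le_mul_right ?_ (dotProduct_pos_of_pos_of_nonneg hy hw hw0)
  calc μ * (y ⬝ᵥ w) = y ⬝ᵥ (μ • w) := by rw [dotProduct_smul, smul_eq_mul]
    _ ≤ y ⬝ᵥ (A *ᵥ w) := dotProduct_le_dotProduct_of_nonneg_left h fun i => (hy i).le
    _ = ρ * (y ⬝ᵥ w) := by rw [dotProduct_mulVec, hyA, smul_dotProduct, smul_eq_mul]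

theorem eq_of_mulVec_eq_smul_of_vecMul_eq_smul [Nonempty ι] {x y : ι → ℝ} {μ ρ : ℝ}
    (hx : ∀ i, 0 < x i) (hy : ∀ i, 0 < y i) (hAx : A *ᵥ x = μ • x) (hyA : y ᵥ* A = ρ • y) :
    μ = ρ := by
  have ne_zero : ∀ v : ι → ℝ, (∀ i, 0 < v i) → v ≠ 0 := fun v hv h0 =>
    (hv (Classical.arbitrary ι)).ne' (congrFun h0 _)
  refine le_antisymm (le_of_smul_le_mulVec_of_vecMul_eq_smul hy hyA (fun i => (hx i).le)
    (ne_zero x hx) hAx.ge) ?_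
  refine le_of_smul_le_mulVec_of_vecMul_eq_smul (A := Aᵀ) hx (by rwa [vecMul_transpose])
    (fun i => (hy i).le) (ne_zero y hy) ?_
  rw [mulVec_transpose, hyA]

theorem norm_smul_le_mulVec_norm (hA : ∀ i j, 0 ≤ A i j) {μ : ℂ} {v : ι → ℂ}
    (hv : A.map (↑) *ᵥ v = μ • v) : ‖μ‖ • (fun i => ‖v i‖) ≤ A *ᵥ fun i => ‖v i‖ := by
  intro i
  calc ‖μ‖ • ‖v i‖ = ‖∑ j, (A i j : ℂ) * v j‖ := by
        rw [smul_eq_mul, ← norm_mul, ← smul_eq_mul, ← Pi.smul_apply, ← hv]; rfl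
    _ ≤ ∑ j, ‖(A i j : ℂ) * v j‖ := norm_sum_le _ _
    _ = (A *ᵥ fun i => ‖v i‖) i := by
        simp [mulVec, dotProduct, abs_of_nonneg (hA i _)]

theorem norm_le_of_mulVec_eq_smul_of_vecMul_eq_smul (hA : ∀ i j, 0 ≤ A i j) {y : ι → ℝ}
    {ρ : ℝ} (hy : ∀ i, 0 < y i) (hyA : y ᵥ* A = ρ • y) {μ : ℂ} {v : ι → ℂ} (hv0 : v ≠ 0)
    (hv : A.map (↑) *ᵥ v = μ • v) : ‖μ‖ ≤ ρ :=
  le_of_smul_le_mulVec_of_vecMul_eq_smul hy hyA (fun _ => norm_nonneg _)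
    (fun h0 => hv0 (funext fun i => norm_eq_zero.1 (congrFun h0 i)))
    (norm_smul_le_mulVec_norm hA hv)

theorem exists_pos_smul_eq_of_mulVec_eq_smul [Nonempty ι] (hA : ∀ i j, 0 < A i j)
    {x y : ι → ℝ} {r : ℝ} (hx : ∀ i, 0 < x i) (hy : ∀ i, 0 < y i) (hAx : A *ᵥ x = r • x)
    (hAy : A *ᵥ y = r • y) : ∃ c : ℝ, 0 < c ∧ y = c • x := by
  obtain ⟨i₀, -, hmin⟩ := exists_min_image univ (fun i => y i / x i) univ_nonempty
  set c := y i₀ / x i₀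
  have hd : 0 ≤ y - c • x := fun i => by
    simpa using (le_div_iff₀ (hx i)).1 (hmin i (mem_univ i))
  have hAd : A *ᵥ (y - c • x) = r • (y - c • x) := by
    rw [mulVec_sub, mulVec_smul, hAx, hAy, smul_sub, smul_comm]
  have hd₀ : (y - c • x) i₀ = 0 := by simp [c, div_mul_cancel₀ _ (hx i₀).ne']
  refine ⟨c, div_pos (hy i₀) (hx i₀), sub_eq_zero.1 ?_⟩
  by_contra hne
  exact (pos_of_nonneg_of_mulVec_eq_smul hA hd hne hAd i₀).ne' hd₀

end Matrix

end

/-- Perron–Frobenius theorem for strictly positive matrices: there is exactly one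
(up to positive scaling) strictly positive eigenvector, and its eigenvalue is the
spectral radius (it dominates the modulus of every complex eigenvalue). -/
theorem perron_frobenius_positive_matrix {n : ℕ} (hn : 0 < n)
    (A : Matrix (Fin n) (Fin n) ℝ) (hA : ∀ i j, 0 < A i j) :
    ∃ (α : Fin n → ℝ) (lam : ℝ),
      (∀ i, 0 < α i) ∧ A.mulVec α = lam • α ∧
      (∀ (β : Fin n → ℝ) (μ : ℝ), (∀ i, 0 < β i) → A.mulVec β = μ • β →
        μ = lam ∧ ∃ c : ℝ, 0 < c ∧ β = c • α) ∧
      (∀ (μ : ℂ) (v : Fin n → ℂ), v ≠ 0 →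
        (A.map (fun x => (x : ℂ))).mulVec v = μ • v → ‖μ‖ ≤ lam) := by
  have : Nonempty (Fin n) := ⟨⟨0, hn⟩⟩
  obtain ⟨α, lam, hα, hAα⟩ := exists_pos_eigenvector_of_pos hA
  obtain ⟨y, ρ, hy, hyA⟩ := exists_pos_eigenvector_of_pos (A := Aᵀ) fun i j => hA j i
  rw [mulVec_transpose] at hyA
  obtain rfl := eq_of_mulVec_eq_smul_of_vecMul_eq_smul hα hy hAα hyA
  refine ⟨α, lam, hα, hAα, fun β μ hβ hAβ => ?_, fun μ v hv0 hv =>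
    norm_le_of_mulVec_eq_smul_of_vecMul_eq_smul (fun i j => (hA i j).le) hy hyA hv0 hv⟩
  obtain rfl := eq_of_mulVec_eq_smul_of_vecMul_eq_smul hβ hy hAβ hyA
  exact ⟨rfl, exists_pos_smul_eq_of_mulVec_eq_smul hA hα hβ hAα hAβ⟩
end

section
/- Let M be a strictly positive n×n diagonalizable matrix with eigenvalues λ₁ > |λ₂| ≥ … ≥ |λₙ| and unit Perron eigenvector α. Then the spectral radius of J = (M − α αᵀ M)/λ₁ is at most |λ₂|/λ₁ < 1. -/
/-!
In an eigenbasis `u` of `M`, the Perron vector `α` is a multiple of `u 0`, because no other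
eigenvalue equals `λ₁`. Since `J w = λ₁⁻¹ (M w - ⟪α, M w⟫ α)`, the map `J` sends `u j` to
`(λⱼ / λ₁) u j` plus a multiple of `u 0`, and it kills `u 0`. So `J` is triangular in this basis,
with diagonal `0, λ₂ / λ₁, …, λₙ / λ₁`, and every eigenvalue of `J` is one of these numbers.
-/

open Matrix Submodule Module

namespace Module.Basis

variable {ι K V : Type*} [Field K] [AddCommGroup V] [Module K V] {b : Basis ι K V} {i₀ : ι}

theorem eq_repr_smul_of_repr_eq_zero {v : V} (h : ∀ i ≠ i₀, b.repr v i = 0) :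
    v = b.repr v i₀ • b i₀ := by
  classical
  exact b.ext_elem fun i => by by_cases hi : i = i₀ <;> simp [hi, h]

variable {f : V →ₗ[K] V} {c : ι → K}

theorem coord_comp_eq_smul_coord (hf : ∀ j, f (b j) - c j • b j ∈ K ∙ b i₀) {i : ι}
    (hi : i ≠ i₀) : b.coord i ∘ₗ f = c i • b.coord i := by
  classical
  refine b.ext fun j => ?_
  obtain ⟨e, he⟩ := mem_span_singleton.mp (hf j)
  rw [eq_sub_iff_add_eq] at he
  rcases eq_or_ne j i with rfl | hji
  · simp [← he, Ne.symm hi]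
  · simp [← he, Ne.symm hi, hji]

theorem eq_of_apply_eq_smul_of_repr_ne_zero (hf : ∀ j, f (b j) - c j • b j ∈ K ∙ b i₀)
    {i : ι} (hi : i ≠ i₀) {μ : K} {v : V} (hμ : f v = μ • v) (hv : b.repr v i ≠ 0) :
    μ = c i := by
  have h := LinearMap.congr_fun (coord_comp_eq_smul_coord hf hi) v
  simp only [LinearMap.comp_apply, hμ, map_smul, LinearMap.smul_apply, coord_apply,
    smul_eq_mul] at h
  exact mul_right_cancel₀ hv h

theorem exists_eq_or_apply_eq_smul_of_apply_eq_smul (hf : ∀ j, f (b j) - c j • b j ∈ K ∙ b i₀)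
    {μ : K} {v : V} (hv : v ≠ 0) (hμ : f v = μ • v) :
    (∃ i ≠ i₀, μ = c i) ∨ f (b i₀) = μ • b i₀ := by
  by_cases h : ∃ i ≠ i₀, b.repr v i ≠ 0
  · obtain ⟨i, hi, hvi⟩ := h
    exact .inl ⟨i, hi, eq_of_apply_eq_smul_of_repr_ne_zero hf hi hμ hvi⟩
  · push Not at h
    have hv₀ := eq_repr_smul_of_repr_eq_zero h
    have hr : b.repr v i₀ ≠ 0 := fun h₀ => hv (by rwa [h₀, zero_smul] at hv₀)
    rw [hv₀, map_smul, smul_comm] at hμ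
    exact .inr (smul_right_injective V hr hμ)

theorem span_singleton_eq_of_apply_eq_smul (hf : ∀ j, f (b j) = c j • b j) {μ : K}
    (hc : ∀ j ≠ i₀, c j ≠ μ) {v : V} (hv : v ≠ 0) (hμ : f v = μ • v) :
    K ∙ b i₀ = K ∙ v := by
  have hf' : ∀ j, f (b j) - c j • b j ∈ K ∙ b i₀ := by simp [hf]
  have h : ∀ j ≠ i₀, b.repr v j = 0 := fun j hj => by
    by_contra hvj
    exact hc j hj (eq_of_apply_eq_smul_of_repr_ne_zero hf' hj hμ hvj).symm
  have hv₀ := eq_repr_smul_of_repr_eq_zero h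
  have hr : b.repr v i₀ ≠ 0 := fun h₀ => hv (by rwa [h₀, zero_smul] at hv₀)
  rw [hv₀, span_singleton_smul_eq hr.isUnit]

end Module.Basis

namespace Matrix

variable {m K L : Type*} [Fintype m] [Field K] [Field L]

/-- The Jacobian at `α` of the normalized power step `x ↦ M x / ‖M x‖`, when `M α = l α`. -/
def powerMethodJacobian (M : Matrix m m K) (α : m → K) (l : K) : Matrix m m K :=
  l⁻¹ • (M - vecMulVec α α * M)

variable {M : Matrix m m K} {α : m → K} {l : K}

theorem powerMethodJacobian_mulVec (w : m → K) :
    powerMethodJacobian M α l *ᵥ w = l⁻¹ • (M *ᵥ w - (α ⬝ᵥ M *ᵥ w) • α) := by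
  rw [powerMethodJacobian, smul_mulVec, sub_mulVec, ← mulVec_mulVec, vecMulVec_mulVec,
    op_smul_eq_smul]

theorem powerMethodJacobian_mulVec_sub_mem_span {w : m → K} {μ : K} (hw : M *ᵥ w = μ • w) :
    powerMethodJacobian M α l *ᵥ w - (l⁻¹ * μ) • w ∈ K ∙ α := by
  rw [powerMethodJacobian_mulVec, hw, smul_sub, smul_smul, smul_smul, sub_sub_cancel_left]
  exact neg_mem (smul_mem _ _ (mem_span_singleton_self α))

theorem powerMethodJacobian_mulVec_eq_zero (hα : M *ᵥ α = l • α) (h1 : α ⬝ᵥ α = 1)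
    {w : m → K} (hw : w ∈ K ∙ α) : powerMethodJacobian M α l *ᵥ w = 0 := by
  obtain ⟨t, rfl⟩ := mem_span_singleton.mp hw
  rw [mulVec_smul, powerMethodJacobian_mulVec, hα, dotProduct_smul, h1, smul_eq_mul, mul_one,
    sub_self, smul_zero, smul_zero]

theorem eq_zero_or_exists_of_powerMethodJacobian_mulVec_eq_smul {b : Basis m K (m → K)}
    {c : m → K} {i₀ : m} (hb : ∀ j, M *ᵥ b j = c j • b j) (hα : M *ᵥ α = l • α)
    (h1 : α ⬝ᵥ α = 1) (hspan : K ∙ b i₀ = K ∙ α) {μ : K} {v : m → K} (hv : v ≠ 0)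
    (hμ : powerMethodJacobian M α l *ᵥ v = μ • v) : μ = 0 ∨ ∃ i ≠ i₀, μ = l⁻¹ * c i := by
  have hJ : ∀ j, (powerMethodJacobian M α l).mulVecLin (b j) - (l⁻¹ * c j) • b j ∈ K ∙ b i₀ :=
    fun j => hspan ▸ powerMethodJacobian_mulVec_sub_mem_span (hb j)
  rcases b.exists_eq_or_apply_eq_smul_of_apply_eq_smul hJ hv hμ with hc | h0
  · exact .inr hc
  · rw [mulVecLin_apply, powerMethodJacobian_mulVec_eq_zero hα h1
      (hspan ▸ mem_span_singleton_self (b i₀)), eq_comm, smul_eq_zero] at h0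
    exact .inl (h0.resolve_right (b.ne_zero i₀))

theorem map_powerMethodJacobian (f : K →+* L) :
    (powerMethodJacobian M α l).map f = powerMethodJacobian (M.map f) (f ∘ α) (f l) := by
  ext i j
  simp [powerMethodJacobian, mul_apply, vecMulVec_apply, map_sum]

end Matrix

theorem jacobian_spectral_radius_lt_one_general {n : ℕ}
    (M : Matrix (Fin (n + 2)) (Fin (n + 2)) ℝ)
    (lamc : Fin (n + 2) → ℂ) (u : Fin (n + 2) → Fin (n + 2) → ℂ)
    (hbasis : LinearIndependent ℂ u)
    (heig : ∀ i, (M.map (fun x => (x : ℂ))).mulVec (u i) = lamc i • u i)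
    (lam1 : ℝ) (hlam1 : 0 < lam1)
    (hdom : ∀ i : Fin (n + 2), i ≠ 0 → ‖lamc i‖ ≤ ‖lamc 1‖)
    (hgap : ‖lamc 1‖ < lam1)
    (α : Fin (n + 2) → ℝ)
    (hα : M.mulVec α = lam1 • α) (hαnorm : ∑ i, α i ^ 2 = 1) :
    (∀ (μ : ℂ) (v : Fin (n + 2) → ℂ), v ≠ 0 →
        (((lam1⁻¹ • (M - Matrix.vecMulVec α α * M))).map
            (fun x => (x : ℂ))).mulVec v = μ • v →
        ‖μ‖ ≤ ‖lamc 1‖ / lam1)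
    ∧ ‖lamc 1‖ / lam1 < 1 := by
  set Mc := M.map Complex.ofRealHom
  set αc := Complex.ofRealHom ∘ α
  have hMα : Mc *ᵥ αc = (lam1 : ℂ) • αc := by
    ext i
    rw [← RingHom.map_mulVec, hα]
    simp [αc]
  have hαα : αc ⬝ᵥ αc = 1 := by
    rw [← RingHom.map_dotProduct, ← map_one Complex.ofRealHom, ← hαnorm]
    simp [dotProduct, sq]
  let B := basisOfLinearIndependentOfCardEqFinrank hbasis (by simp)
  have hMB : ∀ i, Mc *ᵥ B i = lamc i • B i := by
    rw [coe_basisOfLinearIndependentOfCardEqFinrank]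
    exact heig
  have hspan : ℂ ∙ B 0 = ℂ ∙ αc := by
    have hne : ∀ j ≠ 0, lamc j ≠ lam1 := fun j hj h => by
      simpa [h, abs_of_pos hlam1] using (hdom j hj).trans_lt hgap
    have hαc : αc ≠ 0 := fun h => by simp [h] at hαα
    exact Basis.span_singleton_eq_of_apply_eq_smul (f := Mc.mulVecLin) hMB hne hαc hMα
  refine ⟨fun μ v hv hμ => ?_, (div_lt_one hlam1).2 hgap⟩
  have hJmap : (powerMethodJacobian M α lam1).map Complex.ofRealHom =
      powerMethodJacobian Mc αc lam1 :=
    map_powerMethodJacobian Complex.ofRealHom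
  rcases eq_zero_or_exists_of_powerMethodJacobian_mulVec_eq_smul hMB hMα hαα hspan hv
    (hJmap ▸ hμ) with rfl | ⟨i, hi, rfl⟩
  · rw [norm_zero]
    positivity
  · rw [norm_mul, norm_inv, Complex.norm_real, Real.norm_of_nonneg hlam1.le, inv_mul_eq_div]
    exact div_le_div_of_nonneg_right (hdom i hi) hlam1.le

/-- For a strictly positive diagonalizable matrix `M` with eigenvalues
`λ₁ > |λ₂| ≥ … ≥ |λₙ|` and unit Perron eigenvector `α`, the spectral radius of
`J = (M − α αᵀ M)/λ₁` is at most `|λ₂|/λ₁ < 1`: every complex eigenvalue `μ` of `J`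
satisfies `‖μ‖ ≤ |λ₂|/λ₁`. -/
theorem jacobian_spectral_radius_lt_one {n : ℕ}
    (M : Matrix (Fin (n + 2)) (Fin (n + 2)) ℝ) (hM : ∀ i j, 0 < M i j)
    (lamc : Fin (n + 2) → ℂ) (u : Fin (n + 2) → Fin (n + 2) → ℂ)
    (hbasis : LinearIndependent ℂ u)
    (heig : ∀ i, (M.map (fun x => (x : ℂ))).mulVec (u i) = lamc i • u i)
    (lam1 : ℝ) (hlam1 : 0 < lam1) (hlamc0 : lamc 0 = (lam1 : ℂ))
    (hdom : ∀ i : Fin (n + 2), i ≠ 0 → ‖lamc i‖ ≤ ‖lamc 1‖)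
    (hgap : ‖lamc 1‖ < lam1)
    (horder : ∀ i j : Fin (n + 2), i ≠ 0 → i ≤ j → ‖lamc j‖ ≤ ‖lamc i‖)
    (α : Fin (n + 2) → ℝ) (hαpos : ∀ i, 0 < α i)
    (hα : M.mulVec α = lam1 • α) (hαnorm : ∑ i, α i ^ 2 = 1) :
    (∀ (μ : ℂ) (v : Fin (n + 2) → ℂ), v ≠ 0 →
        (((lam1⁻¹ • (M - Matrix.vecMulVec α α * M))).map
            (fun x => (x : ℂ))).mulVec v = μ • v →
        ‖μ‖ ≤ ‖lamc 1‖ / lam1)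
    ∧ ‖lamc 1‖ / lam1 < 1 :=
  jacobian_spectral_radius_lt_one_general M lamc u hbasis heig lam1 hlam1 hdom hgap α hα hαnorm
end
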